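/- arXiv:1205.6622 — 7 statements merged into one kernel-verified Lean document; each statement's English description precedes it below -/
import Mathlib

section
/- Let (X, d) be a geodesic metric space, γ a unit-speed geodesic ray and b its Busemann function. Then b is c-concave, i.e. b = (b^c)^c, where for ψ : X → ℝ ∪ {−∞} the c-transform is ψ^c(y) := inf_{x ∈ X} ( d(x,y)²/2 − ψ(x) ). -/
/-- The `c`-transform with cost `c(x,y) = d(x,y)²/2`, for functions with values in
`ℝ ∪ {−∞}` (modelled by `EReal`). -/
noncomputable def cTransform {X : Type*} [MetricSpace X] (ψ : X → EReal) : X → EReal :=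
  fun y => ⨅ x : X, (((dist x y) ^ 2 / 2 : ℝ) : EReal) - ψ x

/-!
Given `x` and `ε > 0`, go out along the ray to a far point `γ t` with
`d(x, γ t) - t ≤ b x + ε` and let `y` be the point at distance `1` from `x` on a geodesic
towards `γ t`. Since `b x' ≤ d(x', γ t) - t` for every `x'`, the triangle inequality through `y`
gives `b x' ≤ d(x', y) + b x + ε - 1`, and as `d²/2 - d ≥ -1/2` this yields
`b^c y ≥ 1/2 - b x - ε`. Hence `b^{cc} x ≤ d(x, y)²/2 - b^c y ≤ b x + ε`.
-/

section CTransform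

variable {X : Type*} [MetricSpace X]

theorem le_cTransform_cTransform (ψ : X → EReal) : ψ ≤ cTransform (cTransform ψ) := by
  intro x
  refine le_iInf fun y => ?_
  have hψc : cTransform ψ y ≤ (((dist x y) ^ 2 / 2 : ℝ) : EReal) - ψ x := iInf_le _ x
  rw [EReal.le_sub_iff_add_le (.inr (EReal.coe_ne_bot _)) (.inr (EReal.coe_ne_top _)),
    add_comm, dist_comm]
  exact EReal.add_le_of_le_sub hψc

theorem le_cTransform_of_le_dist_add {f : X → ℝ} {y : X} {a : ℝ}
    (hf : ∀ x, f x ≤ dist x y + a) :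
    (((-1 / 2 - a) : ℝ) : EReal) ≤ cTransform (fun x => (f x : EReal)) y := by
  refine le_iInf fun x => ?_
  rw [← EReal.coe_sub, EReal.coe_le_coe_iff]
  nlinarith [hf x, sq_nonneg (dist x y - 1)]

end CTransform

theorem exists_dist_eq_dist_sub_of_geodesic {X : Type*} [MetricSpace X]
    (hgeo : ∀ x y : X, ∃ g : ℝ → X, g 0 = x ∧ g 1 = y ∧
      ∀ s ∈ Set.Icc (0:ℝ) 1, ∀ t ∈ Set.Icc (0:ℝ) 1, dist (g s) (g t) = |s - t| * dist x y)
    {x z : X} {r : ℝ} (hr₀ : 0 ≤ r) (hr : r ≤ dist x z) :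
    ∃ y, dist x y = r ∧ dist y z = dist x z - r := by
  obtain ⟨g, hg0, hg1, hg⟩ := hgeo x z
  set s := r / dist x z
  have hs : s ∈ Set.Icc (0 : ℝ) 1 := ⟨by positivity, div_le_one_of_le₀ hr dist_nonneg⟩
  have hsD : s * dist x z = r :=
    div_mul_cancel_of_imp fun h => le_antisymm (h ▸ hr) hr₀
  refine ⟨g s, ?_, ?_⟩
  · rw [← hg0, hg 0 ⟨le_rfl, zero_le_one⟩ s hs, zero_sub, abs_neg, abs_of_nonneg hs.1, hsD]
  · rw [← hg1, hg s hs 1 ⟨zero_le_one, le_rfl⟩, abs_of_nonpos (by linarith [hs.2]), hg1]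
    linarith

theorem busemann_le_dist_sub {X : Type*} [MetricSpace X] {γ : ℝ → X}
    (hray : ∀ s t : ℝ, 0 ≤ s → 0 ≤ t → dist (γ s) (γ t) = |s - t|) {b : X → ℝ} {x : X}
    (hb : Filter.Tendsto (fun t : ℝ => dist x (γ t) - t) Filter.atTop (nhds (b x)))
    {t : ℝ} (ht : 0 ≤ t) : b x ≤ dist x (γ t) - t := by
  refine le_of_tendsto hb ?_
  filter_upwards [Filter.eventually_ge_atTop t] with s hts
  have hγ : dist (γ t) (γ s) = s - t := by
    rw [hray t s ht (ht.trans hts), abs_sub_comm, abs_of_nonneg (by linarith)]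
  linarith [dist_triangle x (γ t) (γ s)]

theorem exists_dist_eq_one_busemann_le {X : Type*} [MetricSpace X]
    (hgeo : ∀ x y : X, ∃ g : ℝ → X, g 0 = x ∧ g 1 = y ∧
      ∀ s ∈ Set.Icc (0:ℝ) 1, ∀ t ∈ Set.Icc (0:ℝ) 1, dist (g s) (g t) = |s - t| * dist x y)
    {γ : ℝ → X} (hray : ∀ s t : ℝ, 0 ≤ s → 0 ≤ t → dist (γ s) (γ t) = |s - t|)
    {b : X → ℝ}
    (hb : ∀ x : X, Filter.Tendsto (fun t : ℝ => dist x (γ t) - t) Filter.atTop (nhds (b x)))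
    (x : X) {ε : ℝ} (hε : 0 < ε) :
    ∃ y, dist x y = 1 ∧ ∀ x', b x' ≤ dist x' y + (b x + ε - 1) := by
  obtain ⟨t, hbt, ht⟩ :=
    ((hb x).eventually (eventually_le_nhds (lt_add_of_pos_right (b x) hε))
      |>.and (Filter.eventually_ge_atTop (max 0 (dist x (γ 0) + 1)))).exists
  have ht₀ : 0 ≤ t := (le_max_left _ _).trans ht
  have hfar : 1 ≤ dist x (γ t) := by
    have h0t : dist (γ 0) (γ t) = t := by
      rw [hray 0 t le_rfl ht₀, zero_sub, abs_neg, abs_of_nonneg ht₀]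
    linarith [dist_triangle (γ 0) x (γ t), dist_comm x (γ 0), le_max_right 0 (dist x (γ 0) + 1)]
  obtain ⟨y, hxy, hyt⟩ := exists_dist_eq_dist_sub_of_geodesic hgeo zero_le_one hfar
  refine ⟨y, hxy, fun x' => ?_⟩
  linarith [busemann_le_dist_sub hray (hb x') ht₀, dist_triangle x' y (γ t)]

theorem statement5 {X : Type*} [MetricSpace X]
    (hgeo : ∀ x y : X, ∃ g : ℝ → X, g 0 = x ∧ g 1 = y ∧
      ∀ s ∈ Set.Icc (0:ℝ) 1, ∀ t ∈ Set.Icc (0:ℝ) 1, dist (g s) (g t) = |s - t| * dist x y)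
    (γ : ℝ → X)
    (hray : ∀ s t : ℝ, 0 ≤ s → 0 ≤ t → dist (γ s) (γ t) = |s - t|)
    (b : X → ℝ)
    (hb : ∀ x : X, Filter.Tendsto (fun t : ℝ => dist x (γ t) - t) Filter.atTop (nhds (b x))) :
    (fun x : X => (b x : EReal)) = cTransform (cTransform (fun x : X => (b x : EReal))) := by
  funext x
  refine le_antisymm (le_cTransform_cTransform (fun x => (b x : EReal)) x)
    (EReal.le_of_forall_lt_iff_le.mp fun z hz => ?_)
  obtain ⟨y, hxy, hy⟩ :=
    exists_dist_eq_one_busemann_le hgeo hray hb x (sub_pos.mpr (EReal.coe_lt_coe_iff.mp hz))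
  calc cTransform (cTransform (fun x => (b x : EReal))) x
      ≤ (((dist y x) ^ 2 / 2 : ℝ) : EReal) - cTransform (fun x => (b x : EReal)) y := iInf_le _ y
    _ ≤ (((dist y x) ^ 2 / 2 : ℝ) : EReal) - ((-1 / 2 - (b x + (z - b x) - 1) : ℝ) : EReal) :=
        EReal.sub_le_sub le_rfl (le_cTransform_of_le_dist_add hy)
    _ = z := by
        rw [← EReal.coe_sub, EReal.coe_eq_coe_iff, dist_comm, hxy]
        ring
end

section
/- Let (X, d) be a proper geodesic metric space and φ : X → ℝ a c-concave function which is Lipschitz on bounded sets. Then for every x ∈ X the c-superdifferential ∂^cφ(x) := { y : φ(x) + φ^c(y) = d(x,y)²/2 } is nonempty, and moreover every y ∈ ∂^cφ(x) satisfies d(x, y) ≤ Lip(φ|_{B₁(x)}) + 1/2. -/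
/-!
By c-concavity, `φ x = inf_y (d(x,y)²/2 - φ^c y)`, so for every `ε > 0` some `y` satisfies
`φ z - φ x ≤ d(z,y)²/2 - d(x,y)²/2 + ε` for all `z`; for `ε = 0` this is exactly `y ∈ ∂^cφ(x)`.
Testing this inequality at the point `z` at distance `1/2` from `x` on a geodesic to `y` and
using the Lipschitz bound on `B₁(x)` gives `d(x,y) ≤ Lip + 1/4 + 2ε`. Hence for `ε ≤ 1/8` these
closed sets of points `y` lie in a fixed compact ball, and as they decrease with `ε`, their
intersection `∂^cφ(x)` is nonempty.
-/

open Metric Set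

section CSuperdifferential

variable {X : Type*} [MetricSpace X] {φ : X → ℝ} {x y : X} {ε δ : ℝ} {K : NNReal}

lemma cTransform_coe_le (φ : X → ℝ) (y z : X) :
    cTransform (fun x => (φ x : EReal)) y ≤ ((dist z y ^ 2 / 2 - φ z : ℝ) : EReal) :=
  iInf_le_of_le z (EReal.coe_sub _ _).ge

lemma le_cTransform_coe_iff (φ : X → ℝ) (y : X) (r : ℝ) :
    (r : EReal) ≤ cTransform (fun x => (φ x : EReal)) y ↔ ∀ z, r ≤ dist z y ^ 2 / 2 - φ z := by
  simp only [cTransform, le_iInf_iff, ← EReal.coe_sub, EReal.coe_le_coe_iff]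

def IsApproxCSuperdiff (φ : X → ℝ) (ε : ℝ) (x y : X) : Prop :=
  ∀ z, φ z - φ x ≤ dist z y ^ 2 / 2 - dist x y ^ 2 / 2 + ε

lemma IsApproxCSuperdiff.mono (h : IsApproxCSuperdiff φ ε x y) (hεδ : ε ≤ δ) :
    IsApproxCSuperdiff φ δ x y :=
  fun z => (h z).trans (by linarith)

lemma isApproxCSuperdiff_zero_of_forall_nat
    (h : ∀ n : ℕ, IsApproxCSuperdiff φ (1 / (n + 1)) x y) : IsApproxCSuperdiff φ 0 x y := by
  intro z
  refine le_of_forall_pos_le_add fun δ hδ => ?_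
  obtain ⟨n, hn⟩ := exists_nat_one_div_lt hδ
  simpa using (h n).mono hn.le z

lemma isClosed_setOf_isApproxCSuperdiff (φ : X → ℝ) (ε : ℝ) (x : X) :
    IsClosed {y | IsApproxCSuperdiff φ ε x y} := by
  simp only [IsApproxCSuperdiff, ofPred_forall]
  exact isClosed_iInter fun z => isClosed_le continuous_const (by fun_prop)

lemma coe_add_eq_coe_iff_eq_coe_sub {a c : ℝ} {e : EReal} (he : e ≠ ⊤) :
    (a : EReal) + e = c ↔ e = ((c - a : ℝ) : EReal) := by
  induction e using EReal.rec with
  | bot => exact iff_of_false (by simp) (EReal.coe_ne_bot _).symm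
  | top => exact absurd rfl he
  | coe p => norm_cast; constructor <;> intro h <;> linarith

lemma add_cTransform_eq_iff :
    (φ x : EReal) + cTransform (fun z => (φ z : EReal)) y = ((dist x y ^ 2 / 2 : ℝ) : EReal) ↔
      IsApproxCSuperdiff φ 0 x y := by
  have hle := cTransform_coe_le φ y x
  calc _ ↔ cTransform (fun z => (φ z : EReal)) y = ((dist x y ^ 2 / 2 - φ x : ℝ) : EReal) :=
        coe_add_eq_coe_iff_eq_coe_sub (hle.trans_lt (EReal.coe_lt_top _)).ne
    _ ↔ ((dist x y ^ 2 / 2 - φ x : ℝ) : EReal) ≤ cTransform (fun z => (φ z : EReal)) y :=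
        ⟨ge_of_eq, hle.antisymm⟩
    _ ↔ IsApproxCSuperdiff φ 0 x y := by
        rw [le_cTransform_coe_iff]
        exact forall_congr' fun z => by constructor <;> intro h <;> linarith

lemma exists_isApproxCSuperdiff (hx : cTransform (cTransform fun z => (φ z : EReal)) x = φ x)
    (hε : 0 < ε) : ∃ y, IsApproxCSuperdiff φ ε x y := by
  have hlt : cTransform (cTransform fun z => (φ z : EReal)) x < ((φ x + ε : ℝ) : EReal) := by
    rw [hx, EReal.coe_lt_coe_iff]; linarith
  obtain ⟨y, hy⟩ := iInf_lt_iff.mp hlt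
  refine ⟨y, fun z => ?_⟩
  have : ((dist y x ^ 2 / 2 - (dist z y ^ 2 / 2 - φ z) : ℝ) : EReal) < ((φ x + ε : ℝ) : EReal) :=
    (EReal.coe_sub _ _ ▸ EReal.sub_le_sub le_rfl (cTransform_coe_le φ y z)).trans_lt hy
  rw [EReal.coe_lt_coe_iff, dist_comm] at this
  linarith

lemma exists_dist_eq_sub_of_geodesic {g : ℝ → X} (hg0 : g 0 = x) (hg1 : g 1 = y)
    (hg : ∀ s ∈ Icc (0 : ℝ) 1, ∀ t ∈ Icc (0 : ℝ) 1, dist (g s) (g t) = |s - t| * dist x y)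
    {t : ℝ} (ht : t ∈ Icc 0 (dist x y)) : ∃ z, dist x z = t ∧ dist z y = dist x y - t := by
  rcases ht.2.eq_or_lt with rfl | hlt
  · exact ⟨y, rfl, by simp⟩
  have hd : 0 < dist x y := ht.1.trans_lt hlt
  have hs : t / dist x y ∈ Icc (0 : ℝ) 1 :=
    ⟨div_nonneg ht.1 hd.le, (div_le_one hd).mpr ht.2⟩
  refine ⟨g (t / dist x y), ?_, ?_⟩
  · have h := hg 0 (by simp) _ hs
    rwa [hg0, zero_sub, abs_neg, abs_of_nonneg hs.1, div_mul_cancel₀ _ hd.ne'] at h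
  · have h := hg _ hs 1 (by simp)
    rwa [hg1, abs_of_nonpos (by linarith [hs.2]), neg_sub, sub_mul, div_mul_cancel₀ _ hd.ne',
      one_mul] at h

lemma dist_le_of_isApproxCSuperdiff
    (hseg : ∀ t ∈ Icc 0 (dist x y), ∃ z, dist x z = t ∧ dist z y = dist x y - t)
    (hK : LipschitzOnWith K φ (ball x 1)) (hε : ε ≤ 1 / 8) (h : IsApproxCSuperdiff φ ε x y) :
    dist x y ≤ K + 1 / 2 := by
  by_contra! hfar
  obtain ⟨z, hxz, hzy⟩ := hseg (1 / 2) ⟨by norm_num, by linarith [K.coe_nonneg]⟩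
  have hlip : dist (φ z) (φ x) ≤ K * (1 / 2) := by
    simpa [dist_comm z x, hxz] using hK.dist_le_mul z (by norm_num [mem_ball, dist_comm, hxz]) x
      (mem_ball_self one_pos)
  have hz := h z
  rw [hzy] at hz
  rw [Real.dist_eq] at hlip
  nlinarith [neg_abs_le (φ z - φ x)]

lemma exists_isApproxCSuperdiff_zero [ProperSpace X]
    (hx : cTransform (cTransform fun z => (φ z : EReal)) x = φ x)
    (hseg : ∀ y, ∀ t ∈ Icc 0 (dist x y), ∃ z, dist x z = t ∧ dist z y = dist x y - t)
    (hK : LipschitzOnWith K φ (ball x 1)) : ∃ y, IsApproxCSuperdiff φ 0 x y := by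
  set S : ℕ → Set X := fun n => {y | IsApproxCSuperdiff φ (1 / (n + 8)) x y}
  have hS₀ : S 0 ⊆ closedBall x (K + 1 / 2) := fun y hy => by
    rw [mem_closedBall, dist_comm]
    exact dist_le_of_isApproxCSuperdiff (hseg y) hK (by norm_num) hy
  obtain ⟨y, hy⟩ := IsCompact.nonempty_iInter_of_sequence_nonempty_isCompact_isClosed S
    (fun n y hy => IsApproxCSuperdiff.mono hy (by gcongr; simp))
    (fun n => exists_isApproxCSuperdiff hx (by positivity))
    ((isCompact_closedBall _ _).of_isClosed_subset (isClosed_setOf_isApproxCSuperdiff ..) hS₀)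
    (fun n => isClosed_setOf_isApproxCSuperdiff ..)
  exact ⟨y, isApproxCSuperdiff_zero_of_forall_nat fun n =>
    (mem_iInter.mp hy n).mono (by gcongr; norm_num)⟩

end CSuperdifferential

theorem statement7 {X : Type*} [MetricSpace X] [ProperSpace X]
    (hgeo : ∀ x y : X, ∃ g : ℝ → X, g 0 = x ∧ g 1 = y ∧
      ∀ s ∈ Set.Icc (0:ℝ) 1, ∀ t ∈ Set.Icc (0:ℝ) 1, dist (g s) (g t) = |s - t| * dist x y)
    (φ : X → ℝ)
    (hconc : cTransform (cTransform (fun x : X => (φ x : EReal))) = fun x : X => (φ x : EReal))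
    (hlip : ∀ (x : X) (r : ℝ), ∃ K : NNReal, LipschitzOnWith K φ (Metric.closedBall x r)) :
    ∀ x : X,
      (∃ y : X, (φ x : EReal) + cTransform (fun z : X => (φ z : EReal)) y
          = (((dist x y) ^ 2 / 2 : ℝ) : EReal)) ∧
      ∀ K : NNReal, LipschitzOnWith K φ (Metric.ball x 1) →
        ∀ y : X, (φ x : EReal) + cTransform (fun z : X => (φ z : EReal)) y
            = (((dist x y) ^ 2 / 2 : ℝ) : EReal) →
          dist x y ≤ (K : ℝ) + 1 / 2 := by
  intro x
  have hseg : ∀ y, ∀ t ∈ Icc 0 (dist x y), ∃ z, dist x z = t ∧ dist z y = dist x y - t :=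
    fun y t ht => by
      obtain ⟨g, hg0, hg1, hg⟩ := hgeo x y
      exact exists_dist_eq_sub_of_geodesic hg0 hg1 hg ht
  obtain ⟨K₀, hK₀⟩ := hlip x 1
  refine ⟨?_, fun K hK y hy => ?_⟩
  · obtain ⟨y, hy⟩ := exists_isApproxCSuperdiff_zero (congrFun hconc x) hseg
      (hK₀.mono ball_subset_closedBall)
    exact ⟨y, add_cTransform_eq_iff.mpr hy⟩
  · exact dist_le_of_isApproxCSuperdiff (hseg y) hK (by norm_num) (add_cTransform_eq_iff.mp hy)
end

section
/- Let (X, d) be a metric space, φ : X → ℝ a c-concave function, x ∈ X with ∂^cφ(x) ≠ ∅, and define the ascending slope |D⁺φ|(x) := limsup_{z→x} (φ(z) − φ(x))⁺ / d(z,x) (taken 0 at isolated points). Then |D⁺φ|(x) ≤ inf_{y ∈ ∂^cφ(x)} d(x, y). -/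
open Filter Topology

/-- On `⊥` the real `limsup` is the junk value `sInf univ = 0`, whence `0 ≤ L`. -/
lemma limsup_le_of_eventuallyLE_of_tendsto {α : Type*} {l : Filter α} {f g : α → ℝ} {L : ℝ}
    (hf : 0 ≤ f) (hL : 0 ≤ L) (hfg : f ≤ᶠ[l] g) (hg : Tendsto g l (𝓝 L)) :
    limsup f l ≤ L := by
  rcases l.eq_or_neBot with rfl | hl
  · simpa [limsup, limsSup, Real.sInf_univ] using hL
  · calc limsup f l ≤ limsup g l :=
          limsup_le_limsup hfg (isCoboundedUnder_le_of_le l hf) hg.isBoundedUnder_le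
      _ = L := hg.limsup_eq

lemma sub_le_of_add_cTransform_eq {X : Type*} [MetricSpace X] {φ : X → ℝ} {x y : X}
    (hy : (φ x : EReal) + cTransform (fun z : X => (φ z : EReal)) y
      = (((dist x y) ^ 2 / 2 : ℝ) : EReal)) (z : X) :
    φ z - φ x ≤ (dist z y ^ 2 - dist x y ^ 2) / 2 := by
  have hz : cTransform (fun z : X => (φ z : EReal)) y ≤ ((dist z y ^ 2 / 2 - φ z : ℝ) : EReal) :=
    iInf_le_of_le z le_rfl
  induction h : cTransform (fun z : X => (φ z : EReal)) y using EReal.rec with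
  | bot => simp [h] at hy
  | top => simp [h] at hy
  | coe c =>
    rw [h, ← EReal.coe_add, EReal.coe_eq_coe_iff] at hy
    rw [h, EReal.coe_le_coe_iff] at hz
    linarith

lemma posPart_sub_div_dist_le {X : Type*} [PseudoMetricSpace X] {φ : X → ℝ} {x y z : X}
    (h : φ z - φ x ≤ (dist z y ^ 2 - dist x y ^ 2) / 2) :
    max (φ z - φ x) 0 / dist z x ≤ (dist z y + dist x y) / 2 := by
  have hsum : 0 ≤ dist z y + dist x y := by positivity
  have htri : dist z y - dist x y ≤ dist z x := (le_abs_self _).trans (abs_dist_sub_le z x y)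
  have hdiff : (dist z y ^ 2 - dist x y ^ 2) / 2 ≤ (dist z y + dist x y) / 2 * dist z x := by
    nlinarith
  refine div_le_of_le_mul₀ dist_nonneg (by positivity) (max_le (h.trans hdiff) ?_)
  positivity

lemma limsup_posPart_sub_div_dist_le {X : Type*} [PseudoMetricSpace X] {φ : X → ℝ} {x y : X}
    (h : ∀ z, φ z - φ x ≤ (dist z y ^ 2 - dist x y ^ 2) / 2) :
    limsup (fun z : X => max (φ z - φ x) 0 / dist z x) (𝓝[≠] x) ≤ dist x y := by
  have hg : Tendsto (fun z : X => (dist z y + dist x y) / 2) (𝓝[≠] x) (𝓝 (dist x y)) := by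
    have hc : Continuous (fun z : X => (dist z y + dist x y) / 2) := by fun_prop
    simpa using (hc.tendsto x).mono_left nhdsWithin_le_nhds
  exact limsup_le_of_eventuallyLE_of_tendsto (fun z => by positivity) dist_nonneg
    (Eventually.of_forall fun z => posPart_sub_div_dist_le (h z)) hg

theorem statement9_general {X : Type*} [MetricSpace X] (φ : X → ℝ)
    (x : X)
    (hne : ∃ y : X, (φ x : EReal) + cTransform (fun z : X => (φ z : EReal)) y
        = (((dist x y) ^ 2 / 2 : ℝ) : EReal)) :
    Filter.limsup (fun z : X => max (φ z - φ x) 0 / dist z x) (nhdsWithin x {x}ᶜ) ≤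
      sInf {d : ℝ | ∃ y : X,
        ((φ x : EReal) + cTransform (fun z : X => (φ z : EReal)) y
          = (((dist x y) ^ 2 / 2 : ℝ) : EReal)) ∧ d = dist x y} := by
  obtain ⟨y₀, hy₀⟩ := hne
  refine le_csInf ⟨dist x y₀, y₀, hy₀, rfl⟩ ?_
  rintro _ ⟨y, hy, rfl⟩
  exact limsup_posPart_sub_div_dist_le (sub_le_of_add_cTransform_eq hy)

theorem statement9 {X : Type*} [MetricSpace X] (φ : X → ℝ)
    (hconc : cTransform (cTransform (fun x : X => (φ x : EReal))) = fun x : X => (φ x : EReal))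
    (x : X)
    (hne : ∃ y : X, (φ x : EReal) + cTransform (fun z : X => (φ z : EReal)) y
        = (((dist x y) ^ 2 / 2 : ℝ) : EReal)) :
    Filter.limsup (fun z : X => max (φ z - φ x) 0 / dist z x) (nhdsWithin x {x}ᶜ) ≤
      sInf {d : ℝ | ∃ y : X,
        ((φ x : EReal) + cTransform (fun z : X => (φ z : EReal)) y
          = (((dist x y) ^ 2 / 2 : ℝ) : EReal)) ∧ d = dist x y} :=
  statement9_general φ x hne
end

section
/- Let (X, d) be a metric space, φ : X → ℝ a Kantorovich potential in the sense that γ₁ ∈ ∂^cφ(γ₀), and let γ : [0,1] → X be a constant-speed geodesic. Then for every t ∈ (0, 1], φ(γ₀) − φ(γ_t) ≥ d(γ₀, γ₁)² · (t − t²/2). In particular, dividing by d(γ₀, γ_t) = t · d(γ₀, γ₁) and letting t ↓ 0, the descending slope of φ at γ₀ along the geodesic is at least d(γ₀, γ₁). -/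
open Filter Set Topology

theorem EReal.eq_coe_sub_of_coe_add_eq {a r : ℝ} {b : EReal} (h : (a : EReal) + b = r) :
    b = ((r - a : ℝ) : EReal) := by
  induction b with
  | bot => simp at h
  | top => simp at h
  | coe b =>
    rw [← EReal.coe_add, EReal.coe_eq_coe_iff] at h
    rw [EReal.coe_eq_coe_iff]
    linarith

theorem cTransform_le {X : Type*} [MetricSpace X] (ψ : X → EReal) (x y : X) :
    cTransform ψ y ≤ ((dist x y ^ 2 / 2 : ℝ) : EReal) - ψ x :=
  iInf_le (fun x => ((dist x y ^ 2 / 2 : ℝ) : EReal) - ψ x) x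

theorem sub_le_sub_of_add_cTransform_eq {X : Type*} [MetricSpace X] {φ : X → ℝ} {x y : X}
    (hy : (φ x : EReal) + cTransform (fun w => (φ w : EReal)) y
      = ((dist x y ^ 2 / 2 : ℝ) : EReal)) (z : X) :
    dist x y ^ 2 / 2 - dist z y ^ 2 / 2 ≤ φ x - φ z := by
  have hle := cTransform_le (fun w => (φ w : EReal)) z y
  rw [EReal.eq_coe_sub_of_coe_add_eq hy, ← EReal.coe_sub, EReal.coe_le_coe_iff] at hle
  linarith

theorem le_liminf_of_tendsto_of_eventually_le {α β : Type*} [CompleteLinearOrder β]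
    [TopologicalSpace β] [OrderTopology β] {l : Filter α} [l.NeBot] {u v : α → β} {a : β} (hv : Tendsto v l (𝓝 a)) (hvu : v ≤ᶠ[l] u) :
    a ≤ liminf u l :=
  hv.liminf_eq ▸ liminf_le_liminf hvu

theorem le_liminf_div_of_sq_mul_le {D : ℝ} (hD : 0 ≤ D) {f g : ℝ → ℝ}
    (hf : ∀ t ∈ Ioc (0 : ℝ) 1, D ^ 2 * (t - t ^ 2 / 2) ≤ f t)
    (hg : ∀ t ∈ Ioc (0 : ℝ) 1, g t = t * D) :
    (D : EReal) ≤ liminf (fun t => ((f t / g t : ℝ) : EReal)) (𝓝[>] 0) := by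
  have hlim : Tendsto (fun t : ℝ => D * (1 - t / 2)) (𝓝[>] 0) (𝓝 D) := by
    have : Continuous fun t : ℝ => D * (1 - t / 2) := by fun_prop
    simpa using (this.tendsto 0).mono_left nhdsWithin_le_nhds
  refine le_liminf_of_tendsto_of_eventually_le (EReal.tendsto_coe.2 hlim) ?_
  filter_upwards [Ioc_mem_nhdsGT (zero_lt_one' ℝ)] with t ht
  rw [EReal.coe_le_coe_iff, hg t ht]
  rcases hD.eq_or_lt with rfl | hD
  · simp
  · rw [le_div_iff₀ (mul_pos ht.1 hD)]
    nlinarith [hf t ht]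

theorem statement10_general {X : Type*} [MetricSpace X] (φ : X → ℝ)
    (γ : ℝ → X)
    (hgeod : ∀ s ∈ Set.Icc (0:ℝ) 1, ∀ t ∈ Set.Icc (0:ℝ) 1,
      dist (γ s) (γ t) = |s - t| * dist (γ 0) (γ 1))
    (hy : (φ (γ 0) : EReal) + cTransform (fun z : X => (φ z : EReal)) (γ 1)
        = (((dist (γ 0) (γ 1)) ^ 2 / 2 : ℝ) : EReal)) :
    (∀ t ∈ Set.Ioc (0:ℝ) 1,
      dist (γ 0) (γ 1) ^ 2 * (t - t ^ 2 / 2) ≤ φ (γ 0) - φ (γ t)) ∧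
    (dist (γ 0) (γ 1) : EReal) ≤
      Filter.liminf (fun t : ℝ => (((φ (γ 0) - φ (γ t)) / dist (γ 0) (γ t) : ℝ) : EReal))
        (nhdsWithin 0 (Set.Ioi 0)) := by
  have h0 : (0 : ℝ) ∈ Icc (0 : ℝ) 1 := ⟨le_rfl, zero_le_one⟩
  have h1 : (1 : ℝ) ∈ Icc (0 : ℝ) 1 := ⟨zero_le_one, le_rfl⟩
  have hdist₀ : ∀ t ∈ Ioc (0 : ℝ) 1, dist (γ 0) (γ t) = t * dist (γ 0) (γ 1) := fun t ht => by
    rw [hgeod 0 h0 t (Ioc_subset_Icc_self ht), zero_sub, abs_neg, abs_of_pos ht.1]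
  have hdrop : ∀ t ∈ Ioc (0 : ℝ) 1,
      dist (γ 0) (γ 1) ^ 2 * (t - t ^ 2 / 2) ≤ φ (γ 0) - φ (γ t) := fun t ht => by
    have hdist₁ : dist (γ t) (γ 1) = (1 - t) * dist (γ 0) (γ 1) := by
      rw [hgeod t (Ioc_subset_Icc_self ht) 1 h1, abs_sub_comm, abs_of_nonneg (sub_nonneg.2 ht.2)]
    have := sub_le_sub_of_add_cTransform_eq hy (γ t)
    rw [hdist₁] at this
    linarith
  exact ⟨hdrop, le_liminf_div_of_sq_mul_le dist_nonneg hdrop hdist₀⟩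

theorem statement10 {X : Type*} [MetricSpace X] (φ : X → ℝ)
    (hconc : cTransform (cTransform (fun x : X => (φ x : EReal))) = fun x : X => (φ x : EReal))
    (γ : ℝ → X)
    (hgeod : ∀ s ∈ Set.Icc (0:ℝ) 1, ∀ t ∈ Set.Icc (0:ℝ) 1,
      dist (γ s) (γ t) = |s - t| * dist (γ 0) (γ 1))
    (hy : (φ (γ 0) : EReal) + cTransform (fun z : X => (φ z : EReal)) (γ 1)
        = (((dist (γ 0) (γ 1)) ^ 2 / 2 : ℝ) : EReal)) :
    (∀ t ∈ Set.Ioc (0:ℝ) 1,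
      dist (γ 0) (γ 1) ^ 2 * (t - t ^ 2 / 2) ≤ φ (γ 0) - φ (γ t)) ∧
    (dist (γ 0) (γ 1) : EReal) ≤
      Filter.liminf (fun t : ℝ => (((φ (γ 0) - φ (γ t)) / dist (γ 0) (γ t) : ℝ) : EReal))
        (nhdsWithin 0 (Set.Ioi 0)) :=
  statement10_general φ γ hgeod hy
end

section
/- Let f : (0,1) → ℝ, q ∈ (1, ∞), and g ∈ L^q(0,1) nonnegative, and suppose that |f(s) − f(t)| ≤ |∫_s^t g(r) dr| for Lebesgue-a.e. pair (s,t) ∈ (0,1)². Then f coincides a.e. with a function in W^{1,q}(0,1) and its weak derivative satisfies |f'| ≤ g a.e. in (0,1). -/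
/-!
By Fubini, for a.e. `s` the bound `|f s - f t| ≤ |G s - G t|` holds for a.e. `t`, where `G` is a
primitive of `g`. As `G` is continuous, near any such `s` the set of `t` with `G t` close to `G s`
is open and nonempty, hence of positive measure, so two such points `s₁, s₂` share a good `t`
and the bound holds for all pairs of a full-measure set `S`. Then `f = ψ ∘ G` on `S` for a
`1`-Lipschitz `ψ` (McShane extension), and `F = ψ ∘ G` is absolutely continuous with
`|F'| ≤ |G'| = g` at every Lebesgue point of `g`.
-/

open MeasureTheory

theorem intervalIntegral.integral_indicator_of_mem {s : Set ℝ} (hs : s.OrdConnected) {a b : ℝ}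
    (ha : a ∈ s) (hb : b ∈ s) (g : ℝ → ℝ) :
    ∫ x in a..b, s.indicator g x = ∫ x in a..b, g x :=
  intervalIntegral.integral_congr fun _ hx => Set.indicator_of_mem (hs.uIcc_subset ha hb hx) g

theorem MeasureTheory.Measure.ae_ae_of_ae_restrict_prod {α β : Type*} [MeasurableSpace α]
    [MeasurableSpace β] {μ : Measure α} {ν : Measure β} [SFinite μ] [SFinite ν] {s : Set α}
    {t : Set β} {p : α → β → Prop} (h : ∀ᵐ z ∂(μ.prod ν).restrict (s ×ˢ t), p z.1 z.2) :
    ∀ᵐ x ∂μ.restrict s, ∀ᵐ y ∂ν.restrict t, p x y :=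
  ae_ae_of_ae_prod (p := fun z => p z.1 z.2) (by rwa [prod_restrict])

theorem exists_forall_dist_le_of_ae_ae {X E F : Type*} [TopologicalSpace X] [MeasurableSpace X]
    [OpensMeasurableSpace X] [PseudoMetricSpace E] [PseudoMetricSpace F] {μ : Measure X}
    [μ.IsOpenPosMeasure] {U : Set X} (hU : IsOpen U) {f : X → F} {G : X → E} (hG : Continuous G)
    (h : ∀ᵐ s ∂μ.restrict U, ∀ᵐ t ∂μ.restrict U, dist (f s) (f t) ≤ dist (G s) (G t)) :
    ∃ S : Set X, (∀ᵐ s ∂μ.restrict U, s ∈ S) ∧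
      ∀ s₁ ∈ S, ∀ s₂ ∈ S, dist (f s₁) (f s₂) ≤ dist (G s₁) (G s₂) := by
  refine ⟨{s | s ∈ U ∧ ∀ᵐ t ∂μ.restrict U, dist (f s) (f t) ≤ dist (G s) (G t)},
    (ae_restrict_mem hU.measurableSet).and h, ?_⟩
  rintro s₁ ⟨hs₁U, hs₁⟩ s₂ ⟨-, hs₂⟩
  refine le_of_forall_pos_lt_add fun ε hε => ?_
  set V := G ⁻¹' Metric.ball (G s₁) (ε / 2) ∩ U
  have hV : μ V ≠ 0 := ((Metric.isOpen_ball.preimage hG).inter hU |>.measure_pos μ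
    ⟨s₁, Metric.mem_ball_self (half_pos hε), hs₁U⟩).ne'
  obtain ⟨t, ⟨htG, -⟩, ht₁, ht₂⟩ := Measure.exists_mem_of_measure_ne_zero_of_ae hV
    (ae_restrict_of_ae_restrict_of_subset Set.inter_subset_right (hs₁.and hs₂))
  have htG' : dist (G s₁) (G t) < ε / 2 := by rw [dist_comm]; exact htG
  calc dist (f s₁) (f s₂) ≤ dist (f s₁) (f t) + dist (f s₂) (f t) := dist_triangle_right _ _ _
    _ ≤ dist (G s₁) (G t) + dist (G s₂) (G t) := add_le_add ht₁ ht₂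
    _ ≤ dist (G s₁) (G t) + (dist (G s₂) (G s₁) + dist (G s₁) (G t)) := by
      gcongr; exact dist_triangle _ _ _
    _ < dist (G s₁) (G s₂) + ε := by rw [dist_comm (G s₂)]; linarith

theorem exists_lipschitzWith_eqOn_comp {X E : Type*} [PseudoMetricSpace E] {f : X → ℝ}
    {G : X → E} {S : Set X} (h : ∀ s ∈ S, ∀ t ∈ S, dist (f s) (f t) ≤ dist (G s) (G t)) :
    ∃ ψ : E → ℝ, LipschitzWith 1 ψ ∧ Set.EqOn f (ψ ∘ G) S := by
  rcases S.eq_empty_or_nonempty with rfl | ⟨s₀, -⟩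
  · exact ⟨0, LipschitzWith.const' 0, Set.eqOn_empty _ _⟩
  have : Nonempty X := ⟨s₀⟩
  set φ : E → ℝ := f ∘ Function.invFunOn G S
  have hφ : ∀ s ∈ S, φ (G s) = f s := fun s hs => by
    have hex : ∃ t ∈ S, G t = G s := ⟨s, hs, rfl⟩
    have hdist := h _ (Function.invFunOn_mem hex) s hs
    rw [Function.invFunOn_eq hex, dist_self] at hdist
    exact dist_le_zero.1 hdist
  have hφ_lip : LipschitzOnWith 1 φ (G '' S) := by
    refine LipschitzOnWith.of_dist_le_mul ?_
    rintro _ ⟨s, hs, rfl⟩ _ ⟨t, ht, rfl⟩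
    rw [hφ s hs, hφ t ht, NNReal.coe_one, one_mul]
    exact h s hs t ht
  obtain ⟨ψ, hψ, hφψ⟩ := hφ_lip.extend_real
  exact ⟨ψ, hψ, fun s hs => (hφ s hs).symm.trans (hφψ (Set.mem_image_of_mem G hs))⟩

open Topology in
theorem norm_deriv_le_of_dist_le {E : Type*} [NormedAddCommGroup E] [NormedSpace ℝ E]
    {F : ℝ → ℝ} {G : ℝ → E} {G' : E} {x : ℝ} (hG : HasDerivAt G G' x)
    (h : ∀ᶠ y in 𝓝 x, dist (F y) (F x) ≤ dist (G y) (G x)) : ‖deriv F x‖ ≤ ‖G'‖ := by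
  by_cases hF : DifferentiableAt ℝ F x
  · refine le_of_tendsto_of_tendsto (hasDerivAt_iff_tendsto_slope.1 hF.hasDerivAt).norm
      (hasDerivAt_iff_tendsto_slope.1 hG).norm ?_
    filter_upwards [nhdsWithin_le_nhds h] with y hy
    simp only [slope_def_module, norm_smul, ← dist_eq_norm]
    exact mul_le_mul_of_nonneg_left hy (norm_nonneg _)
  · rw [deriv_zero_of_not_differentiableAt hF, norm_zero]
    exact norm_nonneg _

open Filter in
theorem AbsolutelyContinuousOnInterval.of_dist_le {X Y : Type*} [PseudoMetricSpace X]
    [PseudoMetricSpace Y] {f : ℝ → X} {G : ℝ → Y} {a b : ℝ}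
    (hG : AbsolutelyContinuousOnInterval G a b)
    (h : ∀ x ∈ Set.uIcc a b, ∀ y ∈ Set.uIcc a b, dist (f x) (f y) ≤ dist (G x) (G y)) :
    AbsolutelyContinuousOnInterval f a b := by
  refine squeeze_zero' (Eventually.of_forall fun E => Finset.sum_nonneg fun _ _ => dist_nonneg)
    ?_ hG
  filter_upwards [mem_inf_of_right (mem_principal_self _)] with E hE
  exact Finset.sum_le_sum fun i hi => h _ (hE.1 i hi).1 _ (hE.1 i hi).2

theorem absolutelyContinuousOnInterval_of_abs_sub_le {F g : ℝ → ℝ} {a b : ℝ}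
    (hg : IntervalIntegrable g volume a b)
    (hF : ∀ x ∈ Set.uIcc a b, ∀ y ∈ Set.uIcc a b, |F x - F y| ≤ |∫ t in y..x, g t|) :
    AbsolutelyContinuousOnInterval F a b := by
  refine (hg.absolutelyContinuousOnInterval_intervalIntegral Set.left_mem_uIcc).of_dist_le
    fun x hx y hy => ?_
  rw [Real.dist_eq, Real.dist_eq, intervalIntegral.integral_interval_sub_left
    (hg.mono_set (Set.uIcc_subset_uIcc Set.left_mem_uIcc hx))
    (hg.mono_set (Set.uIcc_subset_uIcc Set.left_mem_uIcc hy))]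
  exact hF x hx y hy

theorem ae_abs_deriv_le_of_abs_sub_le {F g : ℝ → ℝ} (hg : LocallyIntegrable g)
    (hF : ∀ x y, |F x - F y| ≤ |∫ t in y..x, g t|) : ∀ᵐ x, |deriv F x| ≤ |g x| := by
  have hg' : ∀ a b, IntervalIntegrable g volume a b := fun a b =>
    intervalIntegrable_iff.2 ((hg.integrableOn_isCompact isCompact_uIcc).mono_set
      Set.uIoc_subset_uIcc)
  filter_upwards [LocallyIntegrable.ae_hasDerivAt_integral hg] with x hx
  refine norm_deriv_le_of_dist_le (hx 0) (Filter.Eventually.of_forall fun y => ?_)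
  rw [Real.dist_eq, Real.dist_eq, intervalIntegral.integral_interval_sub_left (hg' 0 y) (hg' 0 x)]
  exact hF y x

theorem statement13 (f g : ℝ → ℝ) (q : ℝ) (hq : 1 < q)
    (hg0 : ∀ r : ℝ, 0 ≤ g r)
    (hg : MemLp g (ENNReal.ofReal q) (volume.restrict (Set.Ioo (0:ℝ) 1)))
    (hfg : ∀ᵐ p ∂((volume : Measure (ℝ × ℝ)).restrict (Set.Ioo (0:ℝ) 1 ×ˢ Set.Ioo (0:ℝ) 1)),
      |f p.1 - f p.2| ≤ |∫ r in p.2..p.1, g r|) :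
    ∃ F F' : ℝ → ℝ,
      (∀ᵐ t ∂(volume.restrict (Set.Ioo (0:ℝ) 1)), f t = F t) ∧
      MemLp F' (ENNReal.ofReal q) (volume.restrict (Set.Ioo (0:ℝ) 1)) ∧
      (∀ a ∈ Set.Ioo (0:ℝ) 1, ∀ b ∈ Set.Ioo (0:ℝ) 1, F b - F a = ∫ r in a..b, F' r) ∧
      (∀ᵐ t ∂(volume.restrict (Set.Ioo (0:ℝ) 1)), |F' t| ≤ g t) := by
  set I := Set.Ioo (0:ℝ) 1
  set g₁ := I.indicator g
  set G := fun x => ∫ t in (0:ℝ)..x, g₁ t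
  have hg₁ : Integrable g₁ := (integrable_indicator_iff measurableSet_Ioo).2
    (hg.integrable (ENNReal.one_le_ofReal.2 hq.le))
  have hG_sub : ∀ x y, G x - G y = ∫ t in y..x, g₁ t := fun x y =>
    intervalIntegral.integral_interval_sub_left hg₁.intervalIntegrable hg₁.intervalIntegrable
  have hfG : ∀ᵐ s ∂volume.restrict I, ∀ᵐ t ∂volume.restrict I,
      dist (f s) (f t) ≤ dist (G s) (G t) := by
    refine Measure.ae_ae_of_ae_restrict_prod ?_
    rw [← Measure.volume_eq_prod]
    filter_upwards [hfg, ae_restrict_mem (measurableSet_Ioo.prod measurableSet_Ioo)]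
      with p hp ⟨hp₁, hp₂⟩
    rwa [Real.dist_eq, Real.dist_eq, hG_sub,
      intervalIntegral.integral_indicator_of_mem Set.ordConnected_Ioo hp₂ hp₁]
  obtain ⟨S, hS, hfS⟩ := exists_forall_dist_le_of_ae_ae isOpen_Ioo
    (hg₁.continuous_primitive 0) hfG
  obtain ⟨ψ, hψ, hfψ⟩ := exists_lipschitzWith_eqOn_comp hfS
  have hF : ∀ x y, |ψ (G x) - ψ (G y)| ≤ |∫ t in y..x, g₁ t| := fun x y => by
    simpa [← hG_sub, Real.dist_eq] using hψ.dist_le_mul (G x) (G y)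
  have hF'I : ∀ᵐ x ∂volume.restrict I, |deriv (ψ ∘ G) x| ≤ g x := by
    filter_upwards [ae_restrict_of_ae (ae_abs_deriv_le_of_abs_sub_le hg₁.locallyIntegrable hF),
      ae_restrict_mem measurableSet_Ioo] with x hx hxI
    rwa [show g₁ x = g x from Set.indicator_of_mem hxI g, abs_of_nonneg (hg0 x)] at hx
  refine ⟨ψ ∘ G, deriv (ψ ∘ G), hS.mono fun s hs => hfψ hs, ?_, fun a _ b _ => ?_, hF'I⟩
  · refine hg.of_le (measurable_deriv _).aestronglyMeasurable ?_
    filter_upwards [hF'I] with x hx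
    rwa [Real.norm_eq_abs, Real.norm_of_nonneg (hg0 x)]
  · exact (absolutelyContinuousOnInterval_of_abs_sub_le hg₁.intervalIntegrable
      fun x _ y _ => hF x y).integral_deriv_eq_sub.symm
end

section
/- Let (X, d) be a metric space and suppose x_E, x_O ∈ X satisfy d(x_E, x_O) = D = diam(X), and that d(x, x_E) + d(x, x_O) = D for every x ∈ X. Let γ₀, γ₁ ∈ X satisfy the cyclical monotonicity inequality d(γ₀, γ₁)² + D² ≤ d(γ₀, x_O)² + d(x_E, γ₁)². Then γ₀ = x_E or γ₁ = x_O. -/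
/-! Put `a = d(γ₀, x_E)` and `b = d(x_E, γ₁)`. The geodesic hypothesis gives `d(γ₀, x_O) = D - a`,
and the triangle inequality gives `d(γ₀, γ₁) ≥ |b - a|`, so the cyclical monotonicity inequality
becomes `2a(D - b) ≤ 0`. Both factors are nonnegative, hence `a = 0` (so `γ₀ = x_E`) or `b = D`
(so `d(γ₁, x_O) = 0`, i.e. `γ₁ = x_O`). -/

theorem mul_sub_eq_zero_of_sq_add_sq_le {a b c D : ℝ} (ha : 0 ≤ a) (hb : b ≤ D)
    (hc : |b - a| ≤ c) (h : c ^ 2 + D ^ 2 ≤ (D - a) ^ 2 + b ^ 2) : a * (D - b) = 0 := by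
  have hsq : (b - a) ^ 2 ≤ c ^ 2 := sq_le_sq' (abs_le.mp hc).1 (abs_le.mp hc).2
  exact le_antisymm (by nlinarith) (mul_nonneg ha (sub_nonneg.mpr hb))

theorem statement16_general {X : Type*} [MetricSpace X] (xE xO g0 g1 : X) (D : ℝ)
    (hsum : ∀ x : X, dist x xE + dist x xO = D)
    (hcyc : dist g0 g1 ^ 2 + D ^ 2 ≤ dist g0 xO ^ 2 + dist xE g1 ^ 2) :
    g0 = xE ∨ g1 = xO := by
  have hO : dist g0 xO = D - dist g0 xE := by linarith [hsum g0]
  have hb : dist xE g1 ≤ D := by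
    linarith [hsum g1, dist_comm g1 xE, dist_nonneg (x := g1) (y := xO)]
  have htri : |dist xE g1 - dist g0 xE| ≤ dist g0 g1 := by
    simpa only [dist_comm xE g1, dist_comm g1 g0] using abs_dist_sub_le g1 g0 xE
  rw [hO] at hcyc
  rcases mul_eq_zero.mp (mul_sub_eq_zero_of_sq_add_sq_le dist_nonneg hb htri hcyc) with h | h
  · exact Or.inl (dist_eq_zero.mp h)
  · exact Or.inr (dist_eq_zero.mp (by linarith [hsum g1, dist_comm g1 xE]))

theorem statement16 {X : Type*} [MetricSpace X] (xE xO g0 g1 : X) (D : ℝ)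
    (hD : dist xE xO = D)
    (hdiam : ∀ x y : X, dist x y ≤ D)
    (hsum : ∀ x : X, dist x xE + dist x xO = D)
    (hcyc : dist g0 g1 ^ 2 + D ^ 2 ≤ dist g0 xO ^ 2 + dist xE g1 ^ 2) :
    g0 = xE ∨ g1 = xO :=
  statement16_general xE xO g0 g1 D hsum hcyc
end

section
/- Let V be a real vector space of functions containing constants and closed under composition with smooth functions, and let T : V → W be a map into an ordered vector space of functions such that: T is convex and positively 1-homogeneous (T(λf) = λT(f) for λ ≥ 0 and T((1−λ)f₀ + λf₁) ≤ (1−λ)T(f₀) + λT(f₁)), and T satisfies the chain rule T(φ∘f) = (φ'∘f)·T(f) for smooth monotone φ. Then for all positive bounded f₁, f₂ ∈ V one has the Leibniz inequality T(f₁ f₂) ≤ f₁ T(f₂) + f₂ T(f₁). -/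
theorem statement19 {α : Type*} (T : (α → ℝ) → (α → ℝ))
    (hhom : ∀ c : ℝ, 0 ≤ c → ∀ f : α → ℝ, T (c • f) = c • T f)
    (hconv : ∀ lam : ℝ, 0 ≤ lam → lam ≤ 1 → ∀ f₀ f₁ : α → ℝ,
      T ((1 - lam) • f₀ + lam • f₁) ≤ (1 - lam) • T f₀ + lam • T f₁)
    (hchain : ∀ (f : α → ℝ) (φ : ℝ → ℝ) (s : Set ℝ), IsOpen s → (∀ x, f x ∈ s) →
      ContDiffOn ℝ (⊤ : ℕ∞) φ s → MonotoneOn φ s →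
      T (φ ∘ f) = fun x => deriv φ (f x) * T f x) :
    ∀ f₁ f₂ : α → ℝ, (∀ x, 0 < f₁ x) → (∀ x, 0 < f₂ x) →
      (∃ C : ℝ, ∀ x, f₁ x ≤ C) → (∃ C : ℝ, ∀ x, f₂ x ≤ C) →
      T (f₁ * f₂) ≤ f₁ * T f₂ + f₂ * T f₁ := by
  intro f₁ f₂ hf₁ hf₂ _ _
  -- subadditivity from convexity + homogeneity
  have hsub : ∀ g₁ g₂ : α → ℝ, T (g₁ + g₂) ≤ T g₁ + T g₂ := by
    intro g₁ g₂
    have h := hconv (1/2) (by norm_num) (by norm_num) g₁ g₂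
    have h2 : (1 - 1/2 : ℝ) • g₁ + (1/2 : ℝ) • g₂ = (1/2 : ℝ) • (g₁ + g₂) := by
      ext x; simp; ring
    rw [h2, hhom (1/2) (by norm_num)] at h
    intro x
    have hx := h x
    simp only [Pi.smul_apply, Pi.add_apply, smul_eq_mul] at hx ⊢
    linarith
  -- chain rule with exp
  have hexp : ∀ g : α → ℝ, T (Real.exp ∘ g) = fun x => Real.exp (g x) * T g x := by
    intro g
    have := hchain g Real.exp Set.univ isOpen_univ (fun x => Set.mem_univ _)
      (Real.contDiff_exp.contDiffOn) (Real.exp_monotone.monotoneOn _)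
    simpa [Real.deriv_exp] using this
  set g₁ := fun x => Real.log (f₁ x) with hg₁
  set g₂ := fun x => Real.log (f₂ x) with hg₂
  have he₁ : Real.exp ∘ g₁ = f₁ := by
    ext x; simp [hg₁, Real.exp_log (hf₁ x)]
  have he₂ : Real.exp ∘ g₂ = f₂ := by
    ext x; simp [hg₂, Real.exp_log (hf₂ x)]
  have he : Real.exp ∘ (g₁ + g₂) = f₁ * f₂ := by
    ext x
    simp [hg₁, hg₂, Real.exp_add, Real.exp_log (hf₁ x), Real.exp_log (hf₂ x)]
  have key : T (f₁ * f₂) = fun x => f₁ x * f₂ x * T (g₁ + g₂) x := by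
    rw [← he, hexp]
    ext x
    simp [hg₁, hg₂, Real.exp_add, Real.exp_log (hf₁ x), Real.exp_log (hf₂ x)]
  have k₁ : T f₁ = fun x => f₁ x * T g₁ x := by
    rw [← he₁, hexp]; ext x; simp [hg₁, Real.exp_log (hf₁ x)]
  have k₂ : T f₂ = fun x => f₂ x * T g₂ x := by
    rw [← he₂, hexp]; ext x; simp [hg₂, Real.exp_log (hf₂ x)]
  intro x
  have hs := hsub g₁ g₂ x
  simp only [Pi.add_apply] at hs
  have hx1 := hf₁ x
  have hx2 := hf₂ x
  simp only [key, k₁, k₂, Pi.add_apply, Pi.mul_apply]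
  calc f₁ x * f₂ x * T (g₁ + g₂) x
      ≤ f₁ x * f₂ x * (T g₁ x + T g₂ x) := by
        apply mul_le_mul_of_nonneg_left hs (by positivity)
    _ = f₁ x * (f₂ x * T g₂ x) + f₂ x * (f₁ x * T g₁ x) := by ring
end
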